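/- Characterization of the null of zero restricted conditional average treatment effect without censoring (the identification underlying the paper's Theorem 5): under unconfoundedness and overlap, assume in addition Y(0) ≥ 0 and Y(1) ≥ 0 ℙ-almost surely, and fix τ̄ ∈ ℝ. Then E[Y(1)·1{Y(1) ≤ τ̄} | σ(X)] = E[Y(0)·1{Y(0) ≤ τ̄} | σ(X)] ℙ-almost surely if and only if for every x ∈ ℝ^k, E[(T / p(X) − (1 − T) / (1 − p(X))) · Y · 1{Y ≤ τ̄} · 1{X ≤ x}] = 0. -/

import Mathlib

/-!
Write `G₁ = Y(1)·1{Y(1) ≤ τ̄}`, `G₀ = Y(0)·1{Y(0) ≤ τ̄}` (bounded, as the outcomes are nonnegative)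
and `A = {X ≤ x}`. Since `T ∈ {0, 1}`, the integrand equals
`1_A·G₁·T/p(X) − 1_A·G₀·(1 − T)/(1 − p(X))`. Unconfoundedness factors
`E[G₁·T | X] = E[G₁ | X]·p(X)`, so inverse propensity weighting turns the first expectation into
`E[1_A·G₁]`, and likewise the second into `E[1_A·G₀]`. The moment condition therefore says that
`G₁` and `G₀` have equal integrals over every lower orthant `{X ≤ x}`; together with `Ω` these sets
form a π-system generating `σ(X)`, which makes this equivalent to `E[G₁ | X] = E[G₀ | X]` a.s.
-/

open MeasureTheory ProbabilityTheory Set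

theorem ProbabilityTheory.CondIndepFun.condExp_mul {Ω : Type*} {m mΩ : MeasurableSpace Ω}
    [StandardBorelSpace Ω] {hm : m ≤ mΩ} {μ : Measure Ω} [IsFiniteMeasure μ] {f g : Ω → ℝ}
    (hfg : CondIndepFun m hm f g μ) (hf : Measurable f) (hg : Measurable g)
    (hfi : Integrable f μ) (hgi : Integrable g μ) (hfgi : Integrable (f * g) μ) :
    μ[f * g | m] =ᵐ[μ] μ[f | m] * μ[g | m] := by
  -- Under `condExpKernel μ m`, conditional independence is independence of the pushforwards.
  have hprod := ae_of_ae_trim hm ((condIndepFun_iff_map_prod_eq_prod_map_map hf hg).1 hfg)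
  filter_upwards [condExp_ae_eq_integral_condExpKernel hm hfgi,
    condExp_ae_eq_integral_condExpKernel hm hfi, condExp_ae_eq_integral_condExpKernel hm hgi,
    hprod] with ω hω hfω hgω hprodω
  set κ := condExpKernel μ m
  rw [Kernel.prod_apply, Kernel.map_apply _ (hf.prodMk hg), Kernel.map_apply _ hf,
    Kernel.map_apply _ hg] at hprodω
  calc μ[f * g | m] ω = ∫ z, z.1 * z.2 ∂(κ ω).map (fun ω => (f ω, g ω)) := by
        rw [hω, integral_map (hf.prodMk hg).aemeasurable (by fun_prop)]; rfl
    _ = (∫ x, x ∂(κ ω).map f) * ∫ y, y ∂(κ ω).map g := by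
        rw [hprodω]; exact integral_prod_mul (fun x => x) (fun y => y)
    _ = (μ[f | m] * μ[g | m]) ω := by
        rw [integral_map hf.aemeasurable (by fun_prop), integral_map hg.aemeasurable (by fun_prop),
          Pi.mul_apply, hfω, hgω]

theorem ProbabilityTheory.CondIndepFun.condExp_mul_of_bound {Ω : Type*}
    {m mΩ : MeasurableSpace Ω} [StandardBorelSpace Ω] {hm : m ≤ mΩ} {μ : Measure Ω}
    [IsFiniteMeasure μ] {f g : Ω → ℝ} (hfg : CondIndepFun m hm f g μ) (hf : Measurable f)
    (hg : Measurable g) (hfi : Integrable f μ) {C : ℝ} (hgC : ∀ᵐ ω ∂μ, ‖g ω‖ ≤ C) :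
    μ[f * g | m] =ᵐ[μ] μ[f | m] * μ[g | m] :=
  hfg.condExp_mul hf hg hfi (.of_bound hg.aestronglyMeasurable C hgC)
    (hfi.mul_bdd hg.aestronglyMeasurable hgC)

section Orthants

variable {ι : Type*} [Finite ι]

lemma iUnion_Iic_natCast_const_eq_univ : ⋃ n : ℕ, Iic (fun _ : ι => (n : ℝ)) = univ := by
  refine iUnion_eq_univ_iff.2 fun z => ?_
  obtain ⟨M, hM⟩ := (finite_range z).bddAbove
  obtain ⟨n, hn⟩ := exists_nat_ge M
  exact ⟨n, fun j => (hM ⟨j, rfl⟩).trans hn⟩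

lemma MeasurableSpace.pi_eq_generateFrom_Iic :
    (MeasurableSpace.pi : MeasurableSpace (ι → ℝ)) = generateFrom (range Iic) := by
  have hspan : IsCountablySpanning (range (Iic : ℝ → Set ℝ)) :=
    ⟨fun n : ℕ => Iic (n : ℝ), fun n => mem_range_self _,
      iUnion_eq_univ_iff.2 fun y => exists_nat_ge y⟩
  rw [← generateFrom_eq_pi (C := fun _ => range Iic)
    (fun _ => (borel_eq_generateFrom_Iic ℝ).symm.trans BorelSpace.measurable_eq.symm)
    (fun _ => hspan)]
  congr 1
  ext S
  constructor
  · rintro ⟨t, ht, rfl⟩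
    choose x hx using fun i => ht i (mem_univ i)
    exact ⟨x, by simp_rw [← pi_univ_Iic, hx]⟩
  · rintro ⟨x, rfl⟩
    exact ⟨fun i => Iic (x i), fun i _ => mem_range_self _, pi_univ_Iic x⟩

variable {Ω : Type*} {mΩ : MeasurableSpace Ω} {μ : Measure Ω} {X : Ω → ι → ℝ} {f g : Ω → ℝ}

lemma integral_eq_of_forall_setIntegral_preimage_Iic_eq (hX : Measurable X)
    (hf : Integrable f μ) (hg : Integrable g μ)
    (h : ∀ x, ∫ ω in X ⁻¹' Iic x, f ω ∂μ = ∫ ω in X ⁻¹' Iic x, g ω ∂μ) :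
    ∫ ω, f ω ∂μ = ∫ ω, g ω ∂μ := by
  set s : ℕ → Set Ω := fun n => X ⁻¹' Iic (fun _ => (n : ℝ))
  have hs (n : ℕ) : MeasurableSet (s n) := hX measurableSet_Iic
  have hmono : Monotone s := fun a b hab ω hω j =>
    (hω j).trans (Nat.mono_cast hab : (a : ℝ) ≤ b)
  have hunion : ⋃ n, s n = univ := by
    rw [← preimage_iUnion, iUnion_Iic_natCast_const_eq_univ, preimage_univ]
  have hlim {φ : Ω → ℝ} (hφ : Integrable φ μ) :=
    tendsto_setIntegral_of_monotone hs hmono (by rw [hunion]; exact hφ.integrableOn)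
  rw [← setIntegral_univ, ← setIntegral_univ (f := g), ← hunion]
  exact tendsto_nhds_unique (hlim hf) ((hlim hg).congr fun n => (h _).symm)

lemma setIntegral_eq_of_forall_setIntegral_preimage_Iic_eq (hX : Measurable X)
    (hf : Integrable f μ) (hg : Integrable g μ)
    (h : ∀ x, ∫ ω in X ⁻¹' Iic x, f ω ∂μ = ∫ ω in X ⁻¹' Iic x, g ω ∂μ)
    {s : Set Ω} (hs : MeasurableSet[MeasurableSpace.comap X inferInstance] s) :
    ∫ ω in s, f ω ∂μ = ∫ ω in s, g ω ∂μ := by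
  have hgen : MeasurableSpace.comap X inferInstance =
      MeasurableSpace.generateFrom (insert univ (range fun x => X ⁻¹' Iic x)) := by
    rw [MeasurableSpace.generateFrom_insert_univ, MeasurableSpace.pi_eq_generateFrom_Iic,
      MeasurableSpace.comap_generateFrom, ← range_comp]
    rfl
  have hpi : IsPiSystem (range fun x => X ⁻¹' Iic x) := by
    rintro _ ⟨x, rfl⟩ _ ⟨y, rfl⟩ -
    exact ⟨x ⊓ y, by rw [← preimage_inter, Iic_inter_Iic]⟩
  have huniv := integral_eq_of_forall_setIntegral_preimage_Iic_eq hX hf hg h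
  have hm := hX.comap_le
  refine MeasurableSpace.induction_on_inter hgen hpi.insert_univ (by simp) ?_ ?_ ?_ s hs
  · rintro _ (rfl | ⟨x, rfl⟩)
    · simpa using huniv
    · exact h x
  · intro t ht heq
    have hf' := integral_add_compl (hm t ht) hf
    have hg' := integral_add_compl (hm t ht) hg
    linarith
  · intro t hdisj ht heq
    rw [integral_iUnion (fun i => hm _ (ht i)) hdisj hf.integrableOn,
      integral_iUnion (fun i => hm _ (ht i)) hdisj hg.integrableOn]
    exact tsum_congr heq

lemma condExp_comap_ae_eq_iff_forall_setIntegral_preimage_Iic_eq [IsFiniteMeasure μ]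
    (hX : Measurable X) (hf : Integrable f μ) (hg : Integrable g μ) :
    μ[f | MeasurableSpace.comap X inferInstance] =ᵐ[μ] μ[g | MeasurableSpace.comap X inferInstance]
      ↔ ∀ x, ∫ ω in X ⁻¹' Iic x, f ω ∂μ = ∫ ω in X ⁻¹' Iic x, g ω ∂μ := by
  have hm := hX.comap_le
  constructor
  · intro hfg x
    have hA : MeasurableSet[MeasurableSpace.comap X inferInstance] (X ⁻¹' Iic x) :=
      ⟨_, measurableSet_Iic, rfl⟩
    rw [← setIntegral_condExp hm hf hA, ← setIntegral_condExp hm hg hA]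
    exact setIntegral_congr_ae (hm _ hA) (hfg.mono fun ω h _ => h)
  · intro h
    refine ae_eq_condExp_of_forall_setIntegral_eq hm hg
      (fun s _ _ => integrable_condExp.integrableOn) (fun s hs _ => ?_)
      stronglyMeasurable_condExp.aestronglyMeasurable
    rw [setIntegral_condExp hm hf hs]
    exact setIntegral_eq_of_forall_setIntegral_preimage_Iic_eq hX hf hg h hs

end Orthants

section InverseProbabilityWeighting

variable {Ω : Type*} {m mΩ : MeasurableSpace Ω} {μ : Measure Ω} {π f g : Ω → ℝ} {s : Set Ω}
  {ε : ℝ}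

lemma integrable_indicator_one_mul_inv_mul (hε : 0 < ε) (hπ : AEMeasurable π μ)
    (hπε : ∀ᵐ ω ∂μ, ε ≤ π ω) (hs : MeasurableSet s) (hg : Integrable g μ) :
    Integrable (fun ω => s.indicator 1 ω * (π ω)⁻¹ * g ω) μ := by
  refine hg.bdd_mul (c := ε⁻¹)
    ((aestronglyMeasurable_one.indicator hs).mul hπ.inv.aestronglyMeasurable) ?_
  filter_upwards [hπε] with ω hω
  have hinv : ‖(π ω)⁻¹‖ ≤ ε⁻¹ := by
    rw [norm_inv, Real.norm_of_nonneg (hε.le.trans hω)]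
    exact inv_anti₀ hε hω
  by_cases hωs : ω ∈ s
  · rwa [indicator_of_mem hωs, Pi.one_apply, one_mul]
  · rw [indicator_of_notMem hωs, zero_mul, norm_zero]
    positivity

lemma integral_indicator_one_mul_inv_mul_eq_setIntegral [IsFiniteMeasure μ] (hm : m ≤ mΩ)
    (hε : 0 < ε) (hπ : StronglyMeasurable[m] π) (hπε : ∀ᵐ ω ∂μ, ε ≤ π ω)
    (hf : Integrable f μ) (hg : Integrable g μ) (hgf : μ[g | m] =ᵐ[μ] μ[f | m] * π)
    (hs : MeasurableSet[m] s) :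
    ∫ ω, s.indicator 1 ω * (π ω)⁻¹ * g ω ∂μ = ∫ ω in s, f ω ∂μ := by
  have hζ : StronglyMeasurable[m] (s.indicator 1 * π⁻¹ : Ω → ℝ) :=
    (stronglyMeasurable_one.indicator hs).mul hπ.measurable.inv.stronglyMeasurable
  have hζg := integrable_indicator_one_mul_inv_mul hε ((hπ.mono hm).measurable.aemeasurable)
    hπε (hm s hs) hg
  calc ∫ ω, s.indicator 1 ω * (π ω)⁻¹ * g ω ∂μ
      = ∫ ω, μ[(s.indicator 1 * π⁻¹ * g : Ω → ℝ) | m] ω ∂μ := (integral_condExp hm).symm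
    _ = ∫ ω, (s.indicator 1 * π⁻¹ * μ[g | m] : Ω → ℝ) ω ∂μ :=
        integral_congr_ae (condExp_mul_of_stronglyMeasurable_left hζ hζg hg)
    _ = ∫ ω, s.indicator (μ[f | m]) ω ∂μ := by
        refine integral_congr_ae ?_
        filter_upwards [hgf, hπε] with ω hω hπω
        have : π ω ≠ 0 := (hε.trans_le hπω).ne'
        by_cases hωs : ω ∈ s
        · simp only [Pi.mul_apply, Pi.inv_apply, indicator_of_mem hωs, Pi.one_apply, hω]
          field_simp
        · simp [hωs]
    _ = ∫ ω in s, f ω ∂μ := by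
        rw [integral_indicator (hm s hs), setIntegral_condExp hm hf hs]

lemma condExp_mul_one_sub [IsFiniteMeasure μ] {e : Ω → ℝ} (hf : Integrable f μ)
    (hfe : Integrable (f * e) μ) (h : μ[f * e | m] =ᵐ[μ] μ[f | m] * π) :
    μ[f * (1 - e) | m] =ᵐ[μ] μ[f | m] * (1 - π) := by
  have : f * (1 - e) = f - f * e := by ring
  filter_upwards [this ▸ condExp_sub hf hfe m, h] with ω h₁ h₂
  simp only [Pi.sub_apply, Pi.mul_apply, Pi.one_apply] at h₁ h₂ ⊢
  rw [h₁, h₂]; ring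

lemma integral_weighted_contrast_mul_indicator_eq [IsFiniteMeasure μ] (hm : m ≤ mΩ) (hε : 0 < ε)
    {T G₁ G₀ Z : Ω → ℝ} (hπ : StronglyMeasurable[m] π)
    (hπε : ∀ᵐ ω ∂μ, ε ≤ π ω ∧ π ω ≤ 1 - ε) (hT : AEStronglyMeasurable T μ)
    (hT01 : ∀ ω, T ω = 0 ∨ T ω = 1) (hZ : ∀ ω, Z ω = T ω * G₁ ω + (1 - T ω) * G₀ ω)
    (hG₁ : Integrable G₁ μ) (hG₀ : Integrable G₀ μ)
    (hcond₁ : μ[G₁ * T | m] =ᵐ[μ] μ[G₁ | m] * π) (hcond₀ : μ[G₀ * T | m] =ᵐ[μ] μ[G₀ | m] * π)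
    (hs : MeasurableSet[m] s) :
    ∫ ω, (T ω / π ω - (1 - T ω) / (1 - π ω)) * Z ω * s.indicator 1 ω ∂μ
      = ∫ ω in s, G₁ ω ∂μ - ∫ ω in s, G₀ ω ∂μ := by
  have hTb : ∀ᵐ ω ∂μ, ‖T ω‖ ≤ 1 := ae_of_all _ fun ω => by rcases hT01 ω with h | h <;> simp [h]
  have hG₁T : Integrable (G₁ * T) μ := hG₁.mul_bdd hT hTb
  have hG₀T : Integrable (G₀ * T) μ := hG₀.mul_bdd hT hTb
  have hG₀T' : Integrable (G₀ * (1 - T)) μ := by rw [mul_one_sub]; exact hG₀.sub hG₀T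
  have hπ₁ : StronglyMeasurable[m] (1 - π) := stronglyMeasurable_const.sub hπ
  have hπε₁ : ∀ᵐ ω ∂μ, ε ≤ π ω := hπε.mono fun ω h => h.1
  have hπε₀ : ∀ᵐ ω ∂μ, ε ≤ (1 - π) ω := hπε.mono fun ω h => by
    simp only [Pi.sub_apply, Pi.one_apply]; linarith [h.2]
  have hsplit (ω : Ω) : (T ω / π ω - (1 - T ω) / (1 - π ω)) * Z ω * s.indicator 1 ω
      = s.indicator 1 ω * (π ω)⁻¹ * (G₁ * T) ω
        - s.indicator 1 ω * ((1 - π) ω)⁻¹ * (G₀ * (1 - T)) ω := by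
    rcases hT01 ω with h | h <;> simp [hZ, h] <;> ring
  simp_rw [hsplit]
  rw [integral_sub (integrable_indicator_one_mul_inv_mul hε (hπ.mono hm).measurable.aemeasurable
      hπε₁ (hm s hs) hG₁T)
    (integrable_indicator_one_mul_inv_mul hε (hπ₁.mono hm).measurable.aemeasurable
      hπε₀ (hm s hs) hG₀T'),
    integral_indicator_one_mul_inv_mul_eq_setIntegral hm hε hπ hπε₁ hG₁ hG₁T hcond₁ hs,
    integral_indicator_one_mul_inv_mul_eq_setIntegral hm hε hπ₁ hπε₀ hG₀ hG₀T'
      (condExp_mul_one_sub hG₀ hG₀T hcond₀) hs]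

end InverseProbabilityWeighting

lemma measurable_mul_ite_le (τ : ℝ) : Measurable fun y : ℝ => y * if y ≤ τ then (1 : ℝ) else 0 :=
  measurable_id.mul (Measurable.ite measurableSet_Iic measurable_const measurable_const)

lemma integrable_mul_ite_le {Ω : Type*} {mΩ : MeasurableSpace Ω} {μ : Measure Ω}
    [IsFiniteMeasure μ] {Z : Ω → ℝ} (hZ : Measurable Z) (hZ0 : ∀ᵐ ω ∂μ, 0 ≤ Z ω) (τ : ℝ) :
    Integrable (fun ω => Z ω * if Z ω ≤ τ then (1 : ℝ) else 0) μ := by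
  refine .of_bound ((measurable_mul_ite_le τ).comp hZ).aestronglyMeasurable |τ| ?_
  filter_upwards [hZ0] with ω hω
  split_ifs with hle
  · rw [mul_one, Real.norm_of_nonneg hω]
    exact hle.trans (le_abs_self τ)
  · simp

theorem zero_restricted_CATE_characterization_general
    {Ω : Type*} [MeasurableSpace Ω] [StandardBorelSpace Ω]
    (μ : Measure Ω) [IsProbabilityMeasure μ] {k : ℕ}
    (X : Ω → (Fin k → ℝ)) (hX : Measurable X)
    (T : Ω → ℝ) (hT : Measurable T) (hT01 : ∀ ω, T ω = 0 ∨ T ω = 1)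
    (Y0 Y1 Y : Ω → ℝ) (hY0 : Measurable Y0) (hY1 : Measurable Y1)
    (hY : ∀ ω, Y ω = T ω * Y1 ω + (1 - T ω) * Y0 ω)
    (hunconf : CondIndepFun (MeasurableSpace.comap X inferInstance) hX.comap_le
      (fun ω => (Y0 ω, Y1 ω)) T μ)
    (ε : ℝ) (hε : 0 < ε)
    (p : (Fin k → ℝ) → ℝ) (hp : Measurable p)
    (hpX : (fun ω => p (X ω)) =ᵐ[μ] μ[T | MeasurableSpace.comap X inferInstance])
    (hoverlap : ∀ᵐ ω ∂μ, ε ≤ p (X ω) ∧ p (X ω) ≤ 1 - ε)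
    (hpos0 : ∀ᵐ ω ∂μ, 0 ≤ Y0 ω) (hpos1 : ∀ᵐ ω ∂μ, 0 ≤ Y1 ω)
    (τ : ℝ) :
    (μ[(fun ω => Y1 ω * (if Y1 ω ≤ τ then (1 : ℝ) else 0)) |
          MeasurableSpace.comap X inferInstance]
        =ᵐ[μ]
      μ[(fun ω => Y0 ω * (if Y0 ω ≤ τ then (1 : ℝ) else 0)) |
          MeasurableSpace.comap X inferInstance])
      ↔
    (∀ x : Fin k → ℝ,
        (∫ ω, (T ω / p (X ω) - (1 - T ω) / (1 - p (X ω)))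
            * (Y ω * (if Y ω ≤ τ then (1 : ℝ) else 0))
            * (if ∀ j, X ω j ≤ x j then (1 : ℝ) else 0) ∂μ) = 0) := by
  have hG₁ := integrable_mul_ite_le hY1 hpos1 τ
  have hG₀ := integrable_mul_ite_le hY0 hpos0 τ
  have hTb : ∀ᵐ ω ∂μ, ‖T ω‖ ≤ 1 := ae_of_all _ fun ω => by rcases hT01 ω with h | h <;> simp [h]
  have hcond₁ := ((hunconf.comp ((measurable_mul_ite_le τ).comp measurable_snd)
    measurable_id).condExp_mul_of_bound ((measurable_mul_ite_le τ).comp hY1) hT hG₁ hTb).trans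
    (Filter.EventuallyEq.rfl.mul hpX.symm)
  have hcond₀ := ((hunconf.comp ((measurable_mul_ite_le τ).comp measurable_fst)
    measurable_id).condExp_mul_of_bound ((measurable_mul_ite_le τ).comp hY0) hT hG₀ hTb).trans
    (Filter.EventuallyEq.rfl.mul hpX.symm)
  have hobserved (ω : Ω) : Y ω * (if Y ω ≤ τ then (1 : ℝ) else 0)
      = T ω * (Y1 ω * if Y1 ω ≤ τ then 1 else 0)
        + (1 - T ω) * (Y0 ω * if Y0 ω ≤ τ then 1 else 0) := by
    rcases hT01 ω with h | h <;> simp [hY, h]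
  rw [condExp_comap_ae_eq_iff_forall_setIntegral_preimage_Iic_eq hX hG₁ hG₀]
  refine forall_congr' fun x => ?_
  have hind (ω : Ω) :
      (if ∀ j, X ω j ≤ x j then (1 : ℝ) else 0) = (X ⁻¹' Iic x).indicator 1 ω := by
    classical
    simp [indicator_apply, Pi.le_def]
  simp_rw [hind]
  rw [← sub_eq_zero, ← integral_weighted_contrast_mul_indicator_eq (π := fun ω => p (X ω))
    hX.comap_le hε (hp.comp (comap_measurable X)).stronglyMeasurable hoverlap
    hT.aestronglyMeasurable hT01 hobserved hG₁ hG₀ hcond₁ hcond₀ ⟨_, measurableSet_Iic, rfl⟩]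

/-- **Characterization of the null of zero restricted conditional average treatment effect,
no censoring** (the identification underlying the paper's Theorem 5): under unconfoundedness,
overlap and nonnegative potential outcomes, for fixed `τ̄`,
`E[Y(1)·1{Y(1) ≤ τ̄} | σ(X)] = E[Y(0)·1{Y(0) ≤ τ̄} | σ(X)]` a.s. iff
`E[(T/p(X) − (1−T)/(1−p(X))) · Y · 1{Y ≤ τ̄} · 1{X ≤ x}] = 0` for every `x`. -/
theorem zero_restricted_CATE_characterization
    {Ω : Type*} [MeasurableSpace Ω] [StandardBorelSpace Ω] [Nonempty Ω]
    (μ : Measure Ω) [IsProbabilityMeasure μ] {k : ℕ}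
    (X : Ω → (Fin k → ℝ)) (hX : Measurable X)
    (T : Ω → ℝ) (hT : Measurable T) (hT01 : ∀ ω, T ω = 0 ∨ T ω = 1)
    (Y0 Y1 Y : Ω → ℝ) (hY0 : Measurable Y0) (hY1 : Measurable Y1)
    (hY : ∀ ω, Y ω = T ω * Y1 ω + (1 - T ω) * Y0 ω)
    (hunconf : CondIndepFun (MeasurableSpace.comap X inferInstance) hX.comap_le
      (fun ω => (Y0 ω, Y1 ω)) T μ)
    (ε : ℝ) (hε : 0 < ε) (hε2 : ε ≤ 1 / 2)
    (p : (Fin k → ℝ) → ℝ) (hp : Measurable p)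
    (hpX : (fun ω => p (X ω)) =ᵐ[μ] μ[T | MeasurableSpace.comap X inferInstance])
    (hoverlap : ∀ᵐ ω ∂μ, ε ≤ p (X ω) ∧ p (X ω) ≤ 1 - ε)
    (hpos0 : ∀ᵐ ω ∂μ, 0 ≤ Y0 ω) (hpos1 : ∀ᵐ ω ∂μ, 0 ≤ Y1 ω)
    (τ : ℝ) :
    (μ[(fun ω => Y1 ω * (if Y1 ω ≤ τ then (1 : ℝ) else 0)) |
          MeasurableSpace.comap X inferInstance]
        =ᵐ[μ]
      μ[(fun ω => Y0 ω * (if Y0 ω ≤ τ then (1 : ℝ) else 0)) |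
          MeasurableSpace.comap X inferInstance])
      ↔
    (∀ x : Fin k → ℝ,
        (∫ ω, (T ω / p (X ω) - (1 - T ω) / (1 - p (X ω)))
            * (Y ω * (if Y ω ≤ τ then (1 : ℝ) else 0))
            * (if ∀ j, X ω j ≤ x j then (1 : ℝ) else 0) ∂μ) = 0) :=
  zero_restricted_CATE_characterization_general μ X hX T hT hT01 Y0 Y1 Y hY0 hY1 hY hunconf ε hε p
    hp hpX hoverlap hpos0 hpos1 τ
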